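/- arXiv:2103.05957 — 5 statements merged into one kernel-verified Lean document; each statement's English description precedes it below -/
import Mathlib

section
/- Let T, γ, η, x₀ > 0 and let ρ, D, E : [0,T) → ℝ be continuous functions with ρ(t) > 0, D(t) > 0 and E(t) ≥ 0 for all t ∈ [0,T). Let X, Y : [0,T) → ℝ be differentiable with X(0) = x₀, Y(0) = 0 and satisfying the ODE system X'(t) = −η^{-1/2}(D(t) X(t) + E(t) Y(t)) and Y'(t) = −γ η^{-1/2}(D(t) X(t) + E(t) Y(t)) − ρ(t) Y(t) on [0,T). Then the function Z := γX − Y is nonincreasing on [0,T), and for every t ∈ (0,T) one has X(t) ∈ (0, x₀), Y(t) ∈ (−γ x₀, 0) and Z(t) ∈ (0, γ x₀). -/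
/-!
With `V = -Y` the system for `(X, V)` is cooperative: `X' = -a D X + a E V` and
`V' = γ a D X - (γ a E + ρ) V` with `a = η^{-1/2}` and nonnegative off-diagonal coefficients,
so it keeps the quadrant `X > 0, V ≥ 0`. Concretely: at the first time `X` could vanish, `Y` has
stayed `≤ 0` (at a zero of `Y` its derivative is `-γ a D X < 0`), so `X' ≥ -a D X` and Grönwall
keeps `X` positive. An interior zero of `Y ≤ 0` would be a maximum with nonzero derivative,
so `Y < 0` after time `0`, and then `Z' = ρ Y < 0`. The bounds on `X`, `Y`, `Z` follow from
`0 < Z < γ x₀`.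
-/

open Set Filter Topology Real

theorem ContinuousOn.forall_pos_of_forall_Ico_pos {α : Type*} [ConditionallyCompleteLinearOrder α]
    [TopologicalSpace α] [OrderTopology α] {f : α → ℝ} {a b : α}
    (hf : ContinuousOn f (Ico a b)) (h : ∀ s ∈ Ico a b, (∀ u ∈ Ico a s, 0 < f u) → 0 < f s) :
    ∀ t ∈ Ico a b, 0 < f t := by
  intro t ht
  by_contra hft
  have hsub : Icc a t ⊆ Ico a b := Icc_subset_Ico_right ht.2
  have hS : IsCompact (Icc a t ∩ f ⁻¹' Iic 0) :=
    isCompact_Icc.of_isClosed_subset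
      ((hf.mono hsub).preimage_isClosed_of_isClosed isClosed_Icc isClosed_Iic) inter_subset_left
  obtain ⟨s, ⟨hs, hfs⟩, hleast⟩ := hS.exists_isLeast ⟨t, ⟨ht.1, le_rfl⟩, not_lt.1 hft⟩
  refine not_lt.2 hfs (h s (hsub hs) fun u hu => lt_of_not_ge fun hfu => ?_)
  exact (hleast ⟨⟨hu.1, hu.2.le.trans hs.2⟩, hfu⟩).not_gt hu.2

theorem mul_exp_le_of_mul_le_deriv_right {f f' : ℝ → ℝ} {δ K a b : ℝ}
    (hf : ContinuousOn f (Icc a b)) (hf' : ∀ x ∈ Ico a b, HasDerivWithinAt f (f' x) (Ici x) x)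
    (ha : δ ≤ f a) (bound : ∀ x ∈ Ico a b, K * f x ≤ f' x) :
    ∀ x ∈ Icc a b, δ * exp (K * (x - a)) ≤ f x := by
  intro x hx
  have h := le_gronwallBound_of_liminf_deriv_right_le (f := fun x => -f x) (f' := fun x => -f' x)
    (K := K) (ε := 0) hf.neg (fun x hx _ hr => (hf' x hx).neg.liminf_right_slope_le hr) (neg_le_neg ha)
    (fun x hx => by linarith [bound x hx]) x hx
  rw [gronwallBound_ε0] at h
  linarith

theorem HasDerivWithinAt.Ici_of_Ico {f : ℝ → ℝ} {f' a b x : ℝ}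
    (h : HasDerivWithinAt f f' (Ico a b) x) (hx : x ∈ Ico a b) :
    HasDerivWithinAt f f' (Ici x) x :=
  h.mono_of_mem_nhdsWithin (mem_of_superset (Ico_mem_nhdsGE hx.2) (Ico_subset_Ico_left hx.1))

section LiquidationODE

variable {T γ a : ℝ} {ρ D E X Y : ℝ → ℝ}

theorem impact_nonpos_of_portfolio_pos (hγ : 0 < γ) (ha : 0 < a)
    (hD : ∀ t ∈ Ico (0:ℝ) T, 0 < D t) (hY0 : Y 0 = 0)
    (hY : ∀ t ∈ Ico (0:ℝ) T,
      HasDerivWithinAt Y (-γ * a * (D t * X t + E t * Y t) - ρ t * Y t) (Ico 0 T) t)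
    {s : ℝ} (hs : s ∈ Ico (0:ℝ) T) (hX : ∀ u ∈ Ico 0 s, 0 < X u) :
    ∀ u ∈ Icc 0 s, Y u ≤ 0 := by
  have hsub : Icc 0 s ⊆ Ico 0 T := Icc_subset_Ico_right hs.2
  refine image_le_of_deriv_right_lt_deriv_boundary' (B := fun _ => 0)
    (fun u hu => (hY u (hsub hu)).continuousWithinAt.mono hsub)
    (fun u hu => (hY u (hsub (Ico_subset_Icc_self hu))).Ici_of_Ico (hsub (Ico_subset_Icc_self hu)))
    hY0.le continuousOn_const (fun _ _ => hasDerivWithinAt_const _ _ 0) fun u hu hYu => ?_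
  have hDX : 0 < γ * a * (D u * X u) := by
    have := hD u (hsub (Ico_subset_Icc_self hu))
    have := hX u hu
    positivity
  simp only [hYu, mul_zero, add_zero, sub_zero]
  linarith

theorem portfolio_pos (hγ : 0 < γ) (ha : 0 < a) (hDc : ContinuousOn D (Ico 0 T))
    (hD : ∀ t ∈ Ico (0:ℝ) T, 0 < D t) (hE : ∀ t ∈ Ico (0:ℝ) T, 0 ≤ E t)
    (hX0 : 0 < X 0) (hY0 : Y 0 = 0)
    (hX : ∀ t ∈ Ico (0:ℝ) T,
      HasDerivWithinAt X (-a * (D t * X t + E t * Y t)) (Ico 0 T) t)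
    (hY : ∀ t ∈ Ico (0:ℝ) T,
      HasDerivWithinAt Y (-γ * a * (D t * X t + E t * Y t) - ρ t * Y t) (Ico 0 T) t) :
    ∀ t ∈ Ico (0:ℝ) T, 0 < X t := by
  refine ContinuousOn.forall_pos_of_forall_Ico_pos (fun t ht => (hX t ht).continuousWithinAt)
    fun s hs hXs => ?_
  have hsub : Icc 0 s ⊆ Ico 0 T := Icc_subset_Ico_right hs.2
  have hYs := impact_nonpos_of_portfolio_pos hγ ha hD hY0 hY hs hXs
  obtain ⟨C, hC⟩ := isCompact_Icc.bddAbove_image (hDc.mono hsub)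
  -- `C` bounds `D` on `[0, s]`, so `X' ≥ -a C X` there
  have hgronwall := mul_exp_le_of_mul_le_deriv_right (K := -(a * C))
    (fun u hu => (hX u (hsub hu)).continuousWithinAt.mono hsub)
    (fun u hu => (hX u (hsub (Ico_subset_Icc_self hu))).Ici_of_Ico (hsub (Ico_subset_Icc_self hu)))
    le_rfl (fun u hu => ?_) s (right_mem_Icc.2 hs.1)
  · exact (mul_pos hX0 (exp_pos _)).trans_le hgronwall
  · have hu' := Ico_subset_Icc_self hu
    have hDC : D u ≤ C := hC (mem_image_of_mem D hu')
    nlinarith [mul_nonneg (mul_nonneg ha.le (sub_nonneg.2 hDC)) (hXs u hu).le,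
      mul_nonneg (mul_nonneg ha.le (hE u (hsub hu'))) (neg_nonneg.2 (hYs u hu'))]

theorem impact_neg (hγ : 0 < γ) (ha : 0 < a) (hD : ∀ t ∈ Ico (0:ℝ) T, 0 < D t)
    (hXpos : ∀ t ∈ Ico (0:ℝ) T, 0 < X t) (hY0 : Y 0 = 0)
    (hY : ∀ t ∈ Ico (0:ℝ) T,
      HasDerivWithinAt Y (-γ * a * (D t * X t + E t * Y t) - ρ t * Y t) (Ico 0 T) t) :
    ∀ t ∈ Ioo (0:ℝ) T, Y t < 0 := by
  intro t ht
  have hnhds : Ico (0:ℝ) T ∈ 𝓝 t := Ico_mem_nhds ht.1 ht.2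
  have hYnonpos : ∀ u ∈ Ico (0:ℝ) T, Y u ≤ 0 := fun u hu =>
    impact_nonpos_of_portfolio_pos hγ ha hD hY0 hY hu (fun v hv => hXpos v ⟨hv.1, hv.2.trans hu.2⟩)
      u (right_mem_Icc.2 hu.1)
  refine (hYnonpos t (Ioo_subset_Ico_self ht)).lt_of_ne fun hYt => ?_
  -- `t` is then an interior maximum of `Y`, so `Y' t = 0`; but `Y' t = -γ a D X < 0`
  have hmax : IsLocalMax Y t := mem_of_superset hnhds fun u hu => (hYnonpos u hu).trans hYt.ge
  have hderiv := hmax.hasDerivAt_eq_zero ((hY t (Ioo_subset_Ico_self ht)).hasDerivAt hnhds)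
  have hDX : 0 < γ * a * (D t * X t) := by
    have := hD t (Ioo_subset_Ico_self ht)
    have := hXpos t (Ioo_subset_Ico_self ht)
    positivity
  simp only [hYt, mul_zero, add_zero, sub_zero] at hderiv
  linarith

theorem spread_strictAntiOn (hρ : ∀ t ∈ Ico (0:ℝ) T, 0 < ρ t)
    (hYneg : ∀ t ∈ Ioo (0:ℝ) T, Y t < 0)
    (hX : ∀ t ∈ Ico (0:ℝ) T,
      HasDerivWithinAt X (-a * (D t * X t + E t * Y t)) (Ico 0 T) t)
    (hY : ∀ t ∈ Ico (0:ℝ) T,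
      HasDerivWithinAt Y (-γ * a * (D t * X t + E t * Y t) - ρ t * Y t) (Ico 0 T) t) :
    StrictAntiOn (fun t => γ * X t - Y t) (Ico 0 T) := by
  have hZ : ∀ t ∈ Ico (0:ℝ) T,
      HasDerivWithinAt (fun t => γ * X t - Y t) (ρ t * Y t) (Ico 0 T) t := fun t ht =>
    (((hX t ht).const_mul γ).sub (hY t ht)).congr_deriv (by ring)
  refine strictAntiOn_of_deriv_neg (convex_Ico 0 T) (fun t ht => (hZ t ht).continuousWithinAt)
    fun t ht => ?_
  rw [interior_Ico] at ht
  rw [((hZ t (Ioo_subset_Ico_self ht)).hasDerivAt (Ico_mem_nhds ht.1 ht.2)).deriv]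
  exact mul_neg_of_pos_of_neg (hρ t (Ioo_subset_Ico_self ht)) (hYneg t ht)

end LiquidationODE

theorem stmt_0_general (T γ η x₀ : ℝ) (hγ : 0 < γ) (hη : 0 < η) (hx₀ : 0 < x₀)
    (ρ D E X Y : ℝ → ℝ)
    (hDc : ContinuousOn D (Ico 0 T))
    (hρpos : ∀ t ∈ Ico (0:ℝ) T, 0 < ρ t)
    (hDpos : ∀ t ∈ Ico (0:ℝ) T, 0 < D t)
    (hEnonneg : ∀ t ∈ Ico (0:ℝ) T, 0 ≤ E t)
    (hX0 : X 0 = x₀) (hY0 : Y 0 = 0)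
    (hX : ∀ t ∈ Ico (0:ℝ) T,
      HasDerivWithinAt X (-(Real.sqrt η)⁻¹ * (D t * X t + E t * Y t)) (Ico 0 T) t)
    (hY : ∀ t ∈ Ico (0:ℝ) T,
      HasDerivWithinAt Y
        (-γ * (Real.sqrt η)⁻¹ * (D t * X t + E t * Y t) - ρ t * Y t) (Ico 0 T) t) :
    AntitoneOn (fun t => γ * X t - Y t) (Ico 0 T) ∧
      ∀ t ∈ Ioo (0:ℝ) T,
        X t ∈ Ioo 0 x₀ ∧ Y t ∈ Ioo (-(γ * x₀)) 0 ∧ γ * X t - Y t ∈ Ioo 0 (γ * x₀) := by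
  have ha : 0 < (Real.sqrt η)⁻¹ := inv_pos.2 (Real.sqrt_pos.2 hη)
  have hXpos := portfolio_pos hγ ha hDc hDpos hEnonneg (hX0 ▸ hx₀) hY0 hX hY
  have hYneg := impact_neg hγ ha hDpos hXpos hY0 hY
  have hZ := spread_strictAntiOn hρpos hYneg hX hY
  refine ⟨hZ.antitoneOn, fun t ht => ?_⟩
  have hXt := hXpos t (Ioo_subset_Ico_self ht)
  have hYt := hYneg t ht
  have hZt : γ * X t - Y t < γ * x₀ := by
    simpa [hX0, hY0] using hZ ⟨le_rfl, ht.1.trans ht.2⟩ (Ioo_subset_Ico_self ht) ht.1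
  have hγX : 0 < γ * X t := mul_pos hγ hXt
  refine ⟨⟨hXt, lt_of_mul_lt_mul_left (by linarith) hγ.le⟩, ⟨by linarith, hYt⟩, ⟨by linarith, hZt⟩⟩

/-- Theorem 2.3 (pathwise version): the optimal portfolio process never changes sign,
the impact process stays negative, and the spread process `Z = γX − Y` is nonincreasing. -/
theorem stmt_0 (T γ η x₀ : ℝ) (hT : 0 < T) (hγ : 0 < γ) (hη : 0 < η) (hx₀ : 0 < x₀)
    (ρ D E X Y : ℝ → ℝ)
    (hρc : ContinuousOn ρ (Ico 0 T)) (hDc : ContinuousOn D (Ico 0 T))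
    (hEc : ContinuousOn E (Ico 0 T))
    (hρpos : ∀ t ∈ Ico (0:ℝ) T, 0 < ρ t)
    (hDpos : ∀ t ∈ Ico (0:ℝ) T, 0 < D t)
    (hEnonneg : ∀ t ∈ Ico (0:ℝ) T, 0 ≤ E t)
    (hX0 : X 0 = x₀) (hY0 : Y 0 = 0)
    (hX : ∀ t ∈ Ico (0:ℝ) T,
      HasDerivWithinAt X (-(Real.sqrt η)⁻¹ * (D t * X t + E t * Y t)) (Ico 0 T) t)
    (hY : ∀ t ∈ Ico (0:ℝ) T,
      HasDerivWithinAt Y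
        (-γ * (Real.sqrt η)⁻¹ * (D t * X t + E t * Y t) - ρ t * Y t) (Ico 0 T) t) :
    AntitoneOn (fun t => γ * X t - Y t) (Ico 0 T) ∧
      ∀ t ∈ Ioo (0:ℝ) T,
        X t ∈ Ioo 0 x₀ ∧ Y t ∈ Ioo (-(γ * x₀)) 0 ∧ γ * X t - Y t ∈ Ioo 0 (γ * x₀) :=
  stmt_0_general T γ η x₀ hγ hη hx₀ ρ D E X Y hDc hρpos hDpos hEnonneg hX0 hY0 hX hY
end

section
/- Let T > 0, γ > 0, C > 0 and let ρ : [0,T] → (0,∞) be continuous. Set λ(t) := C ρ(t) and φ(t) := √(λ(t) + 2γρ(t)). Define B(t) := −C/γ + (1/γ)·√(C(C+2γ))·coth( arcoth((C+γ)/√(C(C+2γ))) + √(C/(C+2γ)) ∫_t^T ρ(s) ds ). Then B is differentiable on [0,T], B(T) = 1, and B satisfies the Riccati ODE −B'(t) = −(1/φ(t)²)·( γ (ρ(t) B(t))² − 2 λ(t) ρ(t) (1 − B(t)) ) for all t ∈ [0,T]. -/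
open Set

/-- Hyperbolic cotangent. -/
noncomputable def coth (x : ℝ) : ℝ := Real.cosh x / Real.sinh x

/-- Inverse hyperbolic cotangent. -/
noncomputable def arcoth (x : ℝ) : ℝ := (1 / 2) * Real.log ((x + 1) / (x - 1))

/-!
Since `φ² = (C + 2γ)ρ`, the Riccati equation reads `B' = ρ (γB² + 2CB − 2C) / (C + 2γ)`.
With `K = √(C(C + 2γ))` and `m = √(C/(C + 2γ))`, so that `K m = C`, the ansatz
`B = −C/γ + (K/γ) coth u` and `coth' = 1 − coth²` reduce it to `u' = −mρ`, which the integral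
solves; the terminal value comes from `coth (arcoth x) = x`, and `u ≥ arcoth (…) > 0` keeps `sinh u`
away from zero.
-/

open Real

lemma coth_eq_exp_two_mul (y : ℝ) : coth y = (exp (2 * y) + 1) / (exp (2 * y) - 1) := by
  have hy : exp y ≠ 0 := exp_ne_zero y
  rw [coth, cosh_eq, sinh_eq, exp_neg, two_mul, exp_add, div_div_div_cancel_right₀ two_ne_zero,
    ← mul_div_mul_right _ _ hy]
  congr 1 <;> field_simp

lemma exp_two_mul_arcoth {x : ℝ} (hx : 1 < x) : exp (2 * arcoth x) = (x + 1) / (x - 1) := by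
  rw [arcoth, ← mul_assoc, mul_one_div_cancel two_ne_zero, one_mul,
    exp_log (div_pos (by linarith) (by linarith))]

lemma coth_arcoth {x : ℝ} (hx : 1 < x) : coth (arcoth x) = x := by
  have : x - 1 ≠ 0 := by linarith
  rw [coth_eq_exp_two_mul, exp_two_mul_arcoth hx]
  field_simp
  ring

lemma arcoth_pos {x : ℝ} (hx : 1 < x) : 0 < arcoth x := by
  have h : 1 < (x + 1) / (x - 1) := by rw [one_lt_div (by linarith)]; linarith
  rw [arcoth]
  exact mul_pos one_half_pos (log_pos h)

lemma hasDerivAt_coth {u : ℝ} (hu : sinh u ≠ 0) : HasDerivAt coth (1 - coth u ^ 2) u := by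
  refine ((hasDerivAt_cosh u).div (hasDerivAt_sinh u) hu).congr_deriv ?_
  rw [coth, div_pow, one_sub_div (pow_ne_zero 2 hu)]
  ring

lemma HasDerivWithinAt.coth {f : ℝ → ℝ} {f' t : ℝ} {s : Set ℝ} (hf : HasDerivWithinAt f f' s t)
    (ht : Real.sinh (f t) ≠ 0) :
    HasDerivWithinAt (fun x => _root_.coth (f x)) ((1 - _root_.coth (f t) ^ 2) * f') s t :=
  (hasDerivAt_coth ht).comp_hasDerivWithinAt t hf

lemma hasDerivWithinAt_integral_Icc_left {ρ : ℝ → ℝ} {a b t : ℝ} (hρ : ContinuousOn ρ (Icc a b))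
    (ht : t ∈ Icc a b) :
    HasDerivWithinAt (fun x => ∫ s in x..b, ρ s) (-ρ t) (Icc a b) t := by
  have : Fact (t ∈ Icc a b) := ⟨ht⟩
  exact intervalIntegral.integral_hasDerivWithinAt_left
    ((hρ.mono (Icc_subset_Icc_left ht.1)).intervalIntegrable_of_Icc ht.2)
    (hρ.stronglyMeasurableAtFilter_nhdsWithin measurableSet_Icc t) (hρ.continuousWithinAt ht)

lemma one_lt_add_div_sqrt_mul {C γ : ℝ} (hC : 0 < C) (hγ : 0 < γ) :
    1 < (C + γ) / √(C * (C + 2 * γ)) := by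
  have hCγ : 0 < C * (C + 2 * γ) := by positivity
  rw [one_lt_div (sqrt_pos.2 hCγ), sqrt_lt' (by positivity)]
  nlinarith

lemma sqrt_mul_mul_sqrt_div {x y : ℝ} (hx : 0 ≤ x) (hy : 0 < y) : √(x * y) * √(x / y) = x := by
  rw [← sqrt_mul (mul_nonneg hx hy.le), show x * y * (x / y) = x * x by field_simp,
    sqrt_mul_self hx]

lemma riccati_of_coth {γ C K m ρ c B : ℝ} (hγ : γ ≠ 0) (hCγ : C + 2 * γ ≠ 0) (hρ : ρ ≠ 0)
    (hK : K ^ 2 = C * (C + 2 * γ)) (hKm : K * m = C) (hB : B = -C / γ + 1 / γ * K * c) :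
    1 / γ * K * ((1 - c ^ 2) * (m * -ρ)) =
      1 / ((C + 2 * γ) * ρ) * (γ * (ρ * B) ^ 2 - 2 * (C * ρ) * ρ * (1 - B)) := by
  rw [show 1 / γ * K * ((1 - c ^ 2) * (m * -ρ)) = K * m * (ρ * (c ^ 2 - 1)) / γ by ring, hKm, hB]
  field_simp
  rw [eq_div_iff (by rwa [mul_comm])]
  linear_combination -c ^ 2 * hK

theorem stmt_2_general (T γ C : ℝ) (hγ : 0 < γ) (hC : 0 < C)
    (ρ : ℝ → ℝ) (hρc : ContinuousOn ρ (Icc 0 T)) (hρpos : ∀ t ∈ Icc (0:ℝ) T, 0 < ρ t)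
    (lam φ B : ℝ → ℝ)
    (hlam : ∀ t, lam t = C * ρ t)
    (hφ : ∀ t, φ t = Real.sqrt (lam t + 2 * γ * ρ t))
    (hB : ∀ t, B t = -C / γ + (1 / γ) * Real.sqrt (C * (C + 2 * γ)) *
        coth (arcoth ((C + γ) / Real.sqrt (C * (C + 2 * γ))) +
          Real.sqrt (C / (C + 2 * γ)) * ∫ s in t..T, ρ s)) :
    B T = 1 ∧
      ∀ t ∈ Icc (0:ℝ) T,
        HasDerivWithinAt B
          ((1 / (φ t) ^ 2) * (γ * (ρ t * B t) ^ 2 - 2 * lam t * ρ t * (1 - B t)))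
          (Icc 0 T) t := by
  set K := √(C * (C + 2 * γ))
  set m := √(C / (C + 2 * γ))
  set a := arcoth ((C + γ) / K)
  have hK : K ^ 2 = C * (C + 2 * γ) := sq_sqrt (by positivity)
  have hKm : K * m = C := sqrt_mul_mul_sqrt_div hC.le (by positivity)
  have ha : 1 < (C + γ) / K := one_lt_add_div_sqrt_mul hC hγ
  refine ⟨?_, fun t ht => ?_⟩
  · have : K ≠ 0 := (sqrt_pos.2 (by positivity)).ne'
    rw [hB, intervalIntegral.integral_same, mul_zero, add_zero, coth_arcoth ha]
    field_simp
    ring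
  set u := a + m * ∫ s in t..T, ρ s
  have hu : 0 < u := add_pos_of_pos_of_nonneg (arcoth_pos ha) <| mul_nonneg (sqrt_nonneg _) <|
    intervalIntegral.integral_nonneg ht.2 fun s hs => (hρpos s ⟨ht.1.trans hs.1, hs.2⟩).le
  have hBderiv : HasDerivWithinAt B (1 / γ * K * ((1 - coth u ^ 2) * (m * -ρ t))) (Icc 0 T) t := by
    rw [funext hB]
    exact ((((hasDerivWithinAt_integral_Icc_left hρc ht).const_mul m).const_add a).coth
      (sinh_pos_iff.2 hu).ne').const_mul _ |>.const_add _
  have hρt := hρpos t ht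
  convert hBderiv using 1
  rw [hφ, hlam, sq_sqrt (by positivity), show C * ρ t + 2 * γ * ρ t = (C + 2 * γ) * ρ t by ring]
  exact (riccati_of_coth hγ.ne' (by positivity) hρt.ne' hK hKm (hB t)).symm

/-- The Example in Section 2.1 (case `C > 0`): when `λ = Cρ`, the terminal value problem
`−Ḃ = −(1/φ²)(γ(ρB)² − 2λρ(1−B))`, `B(T) = 1` has the stated closed-form solution. -/
theorem stmt_2 (T γ C : ℝ) (hT : 0 < T) (hγ : 0 < γ) (hC : 0 < C)
    (ρ : ℝ → ℝ) (hρc : ContinuousOn ρ (Icc 0 T)) (hρpos : ∀ t ∈ Icc (0:ℝ) T, 0 < ρ t)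
    (lam φ B : ℝ → ℝ)
    (hlam : ∀ t, lam t = C * ρ t)
    (hφ : ∀ t, φ t = Real.sqrt (lam t + 2 * γ * ρ t))
    (hB : ∀ t, B t = -C / γ + (1 / γ) * Real.sqrt (C * (C + 2 * γ)) *
        coth (arcoth ((C + γ) / Real.sqrt (C * (C + 2 * γ))) +
          Real.sqrt (C / (C + 2 * γ)) * ∫ s in t..T, ρ s)) :
    B T = 1 ∧
      ∀ t ∈ Icc (0:ℝ) T,
        HasDerivWithinAt B
          ((1 / (φ t) ^ 2) * (γ * (ρ t * B t) ^ 2 - 2 * lam t * ρ t * (1 - B t)))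
          (Icc 0 T) t :=
  stmt_2_general T γ C hγ hC ρ hρc hρpos lam φ B hlam hφ hB
end

section
/- Let T > 0 and let j : [0,T] → [0,∞) be non-decreasing; extend j by j(t) := 0 for t < 0. Then for every ε ∈ (0,T) and every natural number k, ∫₀^T (j(t) − j(t−ε))² dt ≤ (T/2^k + ε) · j(T)². -/
/-! Extending `j` by `0` keeps it monotone on `(-∞, T]`. For a function `f` monotone on
`[a - c, b]`, the increment `f x - f (x - c)` lies in `[0, f b - f (a - c)]` on `[a, b]`, and its
integral telescopes to `∫_{b-c}^b f - ∫_{a-c}^a f ≤ c (f b - f (a - c))`. Hence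
`∫₀ᵀ (j t - j (t - ε))² ≤ (j T - j (-ε)) · ε (j T - j (-ε)) = ε j(T)²`, with no need to
iterate the doubling estimate. -/

open Set MeasureTheory

theorem MonotoneOn.Iic_of_eq_const_of_lt {α β : Type*} [LinearOrder α] [Preorder β]
    {f : α → β} {a b : α} {c : β} (hf : MonotoneOn f (Icc a b)) (hlt : ∀ x < a, f x = c)
    (hc : c ≤ f a) : MonotoneOn f (Iic b) := by
  intro x hx y hy hxy
  rcases lt_or_ge y a with hya | hay
  · rw [hlt x (hxy.trans_lt hya), hlt y hya]
  rcases lt_or_ge x a with hxa | hax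
  · rw [hlt x hxa]
    exact hc.trans (hf ⟨le_rfl, hay.trans hy⟩ ⟨hay, hy⟩ hay)
  · exact hf ⟨hax, hx⟩ ⟨hay, hy⟩ hxy

namespace MonotoneOn

variable {f : ℝ → ℝ} {a b c : ℝ}

theorem intervalIntegral_sub_comp_sub_le (hf : MonotoneOn f (Icc (a - c) b)) (hab : a ≤ b)
    (hc : 0 ≤ c) : ∫ x in a..b, (f x - f (x - c)) ≤ c * (f b - f (a - c)) := by
  have hslope : (∫ x in a..b, (f x - f (x - c))) = c * ∫ x in a - c..b - c, slope f x (x + c) := by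
    rw [← intervalIntegral.integral_const_mul,
      ← intervalIntegral.integral_comp_sub_right (fun x => c * slope f x (x + c))]
    congr 1 with x
    simpa using (sub_smul_slope f (x - c) (x - c + c)).symm
  rw [hslope]
  gcongr
  rw [← sub_add_cancel b c] at hf
  simpa using hf.intervalIntegral_slope_le (by linarith) hc

theorem intervalIntegral_sq_sub_comp_sub_le (hf : MonotoneOn f (Icc (a - c) b)) (hab : a ≤ b)
    (hc : 0 ≤ c) : ∫ x in a..b, (f x - f (x - c)) ^ 2 ≤ c * (f b - f (a - c)) ^ 2 := by
  set D := f b - f (a - c)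
  have hshift : MapsTo (· - c) (Icc a b) (Icc (a - c) b) := fun x hx =>
    ⟨by linarith [hx.1], by linarith [hx.2]⟩
  have hincl : Icc a b ⊆ Icc (a - c) b := Icc_subset_Icc (by linarith) le_rfl
  have hbound : ∀ x ∈ Icc a b, 0 ≤ f x - f (x - c) ∧ f x - f (x - c) ≤ D := by
    intro x hx
    have hstep := hf (hshift hx) (hincl hx) (by linarith)
    have hupper := hf (hincl hx) ⟨by linarith, le_rfl⟩ hx.2
    have hlower := hf ⟨le_rfl, by linarith⟩ (hshift hx) (by linarith [hx.1])
    constructor <;> linarith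
  have hint : IntervalIntegrable (fun x => f x - f (x - c)) volume a b := by
    rw [← uIcc_of_le hab] at hshift hincl
    exact (hf.mono hincl).intervalIntegrable.sub
      ((hf.comp (fun _ _ _ _ h => sub_le_sub_right h c) hshift).intervalIntegrable)
  calc ∫ x in a..b, (f x - f (x - c)) ^ 2 ≤ ∫ x in a..b, D * (f x - f (x - c)) := by
        rw [intervalIntegral.integral_of_le hab, intervalIntegral.integral_of_le hab]
        refine integral_mono_of_nonneg (ae_of_all _ fun x => sq_nonneg _)
          ((intervalIntegrable_iff_integrableOn_Ioc_of_le hab).1 (hint.const_mul D))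
          (ae_restrict_of_forall_mem measurableSet_Ioc fun x hx => ?_)
        obtain ⟨h0, hD⟩ := hbound x (Ioc_subset_Icc_self hx)
        show (f x - f (x - c)) ^ 2 ≤ D * (f x - f (x - c))
        rw [sq]
        exact mul_le_mul_of_nonneg_right hD h0
    _ = D * ∫ x in a..b, (f x - f (x - c)) := intervalIntegral.integral_const_mul _ _
    _ ≤ D * (c * D) := by
        gcongr
        · exact sub_nonneg.2 (hf ⟨le_rfl, by linarith⟩ ⟨by linarith, le_rfl⟩ (by linarith))
        · exact hf.intervalIntegral_sub_comp_sub_le hab hc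
    _ = c * D ^ 2 := by ring

end MonotoneOn

/-- The key deterministic inequality in the proof of Lemma 4.6: for a non-decreasing
nonnegative `j` on `[0,T]` extended by `0` for negative times,
`∫₀ᵀ (j(t) − j(t−ε))² dt ≤ (T/2^k + ε)·j(T)²`. -/
theorem stmt_8 (T : ℝ) (hT : 0 < T) (j : ℝ → ℝ)
    (hnonneg : ∀ t, 0 ≤ j t)
    (hmono : MonotoneOn j (Icc 0 T))
    (hneg : ∀ t < (0:ℝ), j t = 0) :
    ∀ ε ∈ Ioo (0:ℝ) T, ∀ k : ℕ,
      ∫ t in (0:ℝ)..T, (j t - j (t - ε)) ^ 2 ≤ (T / 2 ^ k + ε) * (j T) ^ 2 := by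
  rintro ε ⟨hε, -⟩ k
  have hj : MonotoneOn j (Icc (0 - ε) T) :=
    (hmono.Iic_of_eq_const_of_lt hneg (hnonneg 0)).mono Icc_subset_Iic_self
  calc ∫ t in (0:ℝ)..T, (j t - j (t - ε)) ^ 2 ≤ ε * (j T - j (0 - ε)) ^ 2 :=
        hj.intervalIntegral_sq_sub_comp_sub_le hT.le hε.le
    _ = ε * j T ^ 2 := by rw [hneg (0 - ε) (by linarith), sub_zero]
    _ ≤ (T / 2 ^ k + ε) * j T ^ 2 := by gcongr; exact le_add_of_nonneg_left (by positivity)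
end

section
/- Let (Ω, F, ℙ) be a probability space, T > 0, γ > 0, ρ̄ > 0, and let ρ : Ω × [0,T] → [0, ρ̄] be jointly measurable. Let X₀ ≥ 0 be a constant and let X : Ω × [0,T] → ℝ be jointly measurable with X(·,0) = X₀, E(∫₀^T X_s² ds) < ∞ and E(X_T²) < ∞. Define Y_t := γ X_t − γ exp(−∫₀^t ρ_u du) ( X₀ + ∫₀^t ρ_s X_s exp(∫₀^s ρ_u du) ds ). Then √(E(Y_T²)) ≤ γ ( X₀ + √(E(X_T²)) + ρ̄ e^{Tρ̄} √( T · E(∫₀^T X_s² ds) ) ), and √( E(∫₀^T Y_t² dt) ) ≤ γ X₀ √T + γ (1 + T ρ̄ e^{Tρ̄}) √( E(∫₀^T X_t² dt) ). -/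
/-!
Since `∫₀ᵗ ρ` is nondecreasing in `t`, the kernel `ρ_s e^{∫₀ˢρ - ∫₀ᵗρ}` (`s ≤ t`) is bounded
by `ρ̄`, so pathwise `|Y_t| ≤ γ |X_t| + γ X₀ + γ ρ̄ ∫₀ᵀ |X_s| ds` on `[0, T]`. Both estimates
then follow from Minkowski's inequality in `L²(ℙ)` (for the second one after applying it in
`L²(dt)` for each `ω`), together with the Cauchy–Schwarz bound `(∫₀ᵀ |X|)² ≤ T ∫₀ᵀ X²`.
-/

open Set MeasureTheory

section L2
variable {α : Type*} [MeasurableSpace α] {μ : Measure α}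

lemma sqrt_integral_sq_eq_toReal_eLpNorm {f : α → ℝ} (hf : MemLp f 2 μ) :
    √(∫ x, f x ^ 2 ∂μ) = (eLpNorm f 2 μ).toReal := by
  rw [hf.eLpNorm_eq_integral_rpow_norm two_ne_zero ENNReal.ofNat_ne_top,
    ENNReal.toReal_ofReal (by positivity), Real.sqrt_eq_rpow]
  norm_num [Real.norm_eq_abs, sq_abs]

lemma sqrt_integral_sq_add_le {f g : α → ℝ} (hf : MemLp f 2 μ) (hg : MemLp g 2 μ) :
    √(∫ x, (f x + g x) ^ 2 ∂μ) ≤ √(∫ x, f x ^ 2 ∂μ) + √(∫ x, g x ^ 2 ∂μ) := by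
  have hfg := sqrt_integral_sq_eq_toReal_eLpNorm (hf.add hg)
  simp only [Pi.add_apply] at hfg
  rw [hfg, sqrt_integral_sq_eq_toReal_eLpNorm hf, sqrt_integral_sq_eq_toReal_eLpNorm hg]
  exact ENNReal.toReal_le_add (eLpNorm_add_le hf.1 hg.1 one_le_two) hf.eLpNorm_ne_top
    hg.eLpNorm_ne_top

lemma sqrt_integral_sq_le_of_abs_le_add {f g h : α → ℝ} (hg : MemLp g 2 μ) (hh : MemLp h 2 μ)
    (hfgh : ∀ᵐ x ∂μ, |f x| ≤ g x + h x) :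
    √(∫ x, f x ^ 2 ∂μ) ≤ √(∫ x, g x ^ 2 ∂μ) + √(∫ x, h x ^ 2 ∂μ) := by
  refine (Real.sqrt_le_sqrt ?_).trans (sqrt_integral_sq_add_le hg hh)
  refine integral_mono_of_nonneg (ae_of_all _ fun x => sq_nonneg _) (hg.add hh).integrable_sq ?_
  filter_upwards [hfgh] with x hx
  exact sq_le_sq.2 (hx.trans (le_abs_self _))

lemma sqrt_integral_const_mul_sq (c : ℝ) (f : α → ℝ) :
    √(∫ x, (c * f x) ^ 2 ∂μ) = |c| * √(∫ x, f x ^ 2 ∂μ) := by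
  simp_rw [mul_pow, integral_const_mul, Real.sqrt_mul (sq_nonneg c), Real.sqrt_sq_eq_abs]

lemma sqrt_integral_const_sq (c : ℝ) : √(∫ _x, c ^ 2 ∂μ) = √(μ.real univ) * |c| := by
  rw [integral_const, smul_eq_mul, Real.sqrt_mul measureReal_nonneg, Real.sqrt_sq_eq_abs]

lemma sqrt_integral_sq_const_add_mul_le [IsProbabilityMeasure μ] {a b : ℝ} (ha : 0 ≤ a)
    (hb : 0 ≤ b) {f : α → ℝ} (hf : MemLp f 2 μ) :
    √(∫ x, (a + b * f x) ^ 2 ∂μ) ≤ a + b * √(∫ x, f x ^ 2 ∂μ) := by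
  have hh : MemLp (fun x => b * |f x|) 2 μ := hf.abs.const_mul b
  have h := sqrt_integral_sq_le_of_abs_le_add (memLp_const a) hh (ae_of_all _ fun x =>
    (abs_add_le a (b * f x)).trans_eq (by rw [abs_of_nonneg ha, abs_mul, abs_of_nonneg hb]))
  simpa only [sqrt_integral_const_sq, probReal_univ, Real.sqrt_one, one_mul,
    abs_of_nonneg ha, sqrt_integral_const_mul_sq, abs_of_nonneg hb, sq_abs] using h

lemma sq_integral_abs_le [IsFiniteMeasure μ] {f : α → ℝ} (hf : MemLp f 2 μ) :
    (∫ x, |f x| ∂μ) ^ 2 ≤ μ.real univ * ∫ x, f x ^ 2 ∂μ := by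
  have h := integral_mul_le_Lp_mul_Lq_of_nonneg Real.HolderConjugate.two_two
    (ae_of_all _ fun x => abs_nonneg (f x)) (ae_of_all _ fun _ => zero_le_one)
    (by rw [ENNReal.ofReal_ofNat]; exact hf.abs) (by simpa using memLp_const (1 : ℝ))
  norm_num [← Real.sqrt_eq_rpow, sq_abs] at h
  calc (∫ x, |f x| ∂μ) ^ 2 ≤ (√(∫ x, f x ^ 2 ∂μ) * √(μ.real univ)) ^ 2 := by
        gcongr
    _ = μ.real univ * ∫ x, f x ^ 2 ∂μ := by
        rw [mul_pow, Real.sq_sqrt (integral_nonneg fun x => sq_nonneg _),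
          Real.sq_sqrt measureReal_nonneg, mul_comm]

lemma MeasureTheory.Integrable.memLp_two_sqrt {f : α → ℝ} (hf : Integrable f μ) (hf₀ : 0 ≤ f) :
    MemLp (fun x => √(f x)) 2 μ :=
  (memLp_two_iff_integrable_sq hf.1.aemeasurable.sqrt.aestronglyMeasurable).2 <|
    hf.congr (ae_of_all _ fun x => (Real.sq_sqrt (hf₀ x)).symm)

end L2

section Paths
variable {Ω τ : Type*} [MeasurableSpace Ω] [MeasurableSpace τ] {ℙ : Measure Ω} {ν : Measure τ}
  [IsFiniteMeasure ν] {X : Ω → τ → ℝ}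

lemma memLp_integral_abs (hXm : Measurable (Function.uncurry X)) (hX : ∀ ω, MemLp (X ω) 2 ν)
    (hQ : Integrable (fun ω => ∫ t, X ω t ^ 2 ∂ν) ℙ) :
    MemLp (fun ω => ∫ t, |X ω t| ∂ν) 2 ℙ := by
  have hm : StronglyMeasurable fun ω => ∫ t, |X ω t| ∂ν :=
    StronglyMeasurable.integral_prod_right' hXm.abs.stronglyMeasurable
  refine (memLp_two_iff_integrable_sq hm.aestronglyMeasurable).2 <|
    (hQ.const_mul (ν.real univ)).mono' (hm.measurable.pow_const 2).aestronglyMeasurable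
      (ae_of_all _ fun ω => ?_)
  rw [Real.norm_eq_abs, abs_of_nonneg (sq_nonneg _)]
  exact sq_integral_abs_le (hX ω)

lemma sqrt_integral_sq_integral_abs_le (hX : ∀ ω, MemLp (X ω) 2 ν)
    (hQ : Integrable (fun ω => ∫ t, X ω t ^ 2 ∂ν) ℙ) :
    √(∫ ω, (∫ t, |X ω t| ∂ν) ^ 2 ∂ℙ) ≤ √(ν.real univ) * √(∫ ω, ∫ t, X ω t ^ 2 ∂ν ∂ℙ) := by
  rw [← Real.sqrt_mul measureReal_nonneg, ← integral_const_mul]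
  exact Real.sqrt_le_sqrt <| integral_mono_of_nonneg (ae_of_all _ fun _ => sq_nonneg _)
    (hQ.const_mul _) (ae_of_all _ fun ω => sq_integral_abs_le (hX ω))

lemma sqrt_integral_integral_sq_le {γ : ℝ} (hγ : 0 ≤ γ) {Y : Ω → τ → ℝ} {c : Ω → ℝ}
    (hX : ∀ ω, MemLp (X ω) 2 ν) (hQ : Integrable (fun ω => ∫ t, X ω t ^ 2 ∂ν) ℙ)
    (hc : MemLp c 2 ℙ) (hY : ∀ ω, ∀ᵐ t ∂ν, |Y ω t| ≤ γ * |X ω t| + c ω) :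
    √(∫ ω, ∫ t, Y ω t ^ 2 ∂ν ∂ℙ) ≤
      γ * √(∫ ω, ∫ t, X ω t ^ 2 ∂ν ∂ℙ) + √(ν.real univ) * √(∫ ω, c ω ^ 2 ∂ℙ) := by
  have hpath : ∀ ω, √(∫ t, Y ω t ^ 2 ∂ν) ≤
      γ * √(∫ t, X ω t ^ 2 ∂ν) + √(ν.real univ) * |c ω| := by
    intro ω
    have hg : MemLp (fun t => γ * |X ω t|) 2 ν := (hX ω).abs.const_mul γ
    have h := sqrt_integral_sq_le_of_abs_le_add hg (memLp_const (c ω)) (hY ω)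
    simpa only [sqrt_integral_const_mul_sq, abs_of_nonneg hγ, sq_abs,
      sqrt_integral_const_sq] using h
  have hh : MemLp (fun ω => √(ν.real univ) * |c ω|) 2 ℙ := hc.abs.const_mul _
  have h := sqrt_integral_sq_le_of_abs_le_add ((hQ.memLp_two_sqrt fun ω =>
      integral_nonneg fun t => sq_nonneg (X ω t)).const_mul γ) hh
    (ae_of_all _ fun ω => (abs_of_nonneg (Real.sqrt_nonneg _)).trans_le (hpath ω))
  simpa only [Real.sq_sqrt (integral_nonneg fun _ => sq_nonneg _), sqrt_integral_const_mul_sq,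
    abs_of_nonneg hγ, abs_of_nonneg (Real.sqrt_nonneg _), sq_abs] using h

variable [IsProbabilityMeasure ℙ] {γ a b : ℝ}

lemma sqrt_integral_sq_const_add_mul_integral_abs_le (ha : 0 ≤ a) (hb : 0 ≤ b)
    (hXm : Measurable (Function.uncurry X)) (hX : ∀ ω, MemLp (X ω) 2 ν)
    (hQ : Integrable (fun ω => ∫ t, X ω t ^ 2 ∂ν) ℙ) :
    √(∫ ω, (a + b * ∫ t, |X ω t| ∂ν) ^ 2 ∂ℙ) ≤
      a + b * (√(ν.real univ) * √(∫ ω, ∫ t, X ω t ^ 2 ∂ν ∂ℙ)) :=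
  (sqrt_integral_sq_const_add_mul_le ha hb (memLp_integral_abs hXm hX hQ)).trans <|
    add_le_add_right (mul_le_mul_of_nonneg_left (sqrt_integral_sq_integral_abs_le hX hQ) hb) a

lemma sqrt_integral_sq_le_of_abs_le_integral_abs (hγ : 0 ≤ γ) (ha : 0 ≤ a) (hb : 0 ≤ b)
    (hXm : Measurable (Function.uncurry X)) (hX : ∀ ω, MemLp (X ω) 2 ν)
    (hQ : Integrable (fun ω => ∫ t, X ω t ^ 2 ∂ν) ℙ) {Z W : Ω → ℝ} (hW : MemLp W 2 ℙ)
    (hZ : ∀ ω, |Z ω| ≤ γ * |W ω| + (a + b * ∫ t, |X ω t| ∂ν)) :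
    √(∫ ω, Z ω ^ 2 ∂ℙ) ≤ γ * √(∫ ω, W ω ^ 2 ∂ℙ) +
      (a + b * (√(ν.real univ) * √(∫ ω, ∫ t, X ω t ^ 2 ∂ν ∂ℙ))) := by
  have hγW : MemLp (fun ω => γ * |W ω|) 2 ℙ := hW.abs.const_mul γ
  have h := sqrt_integral_sq_le_of_abs_le_add hγW
    ((memLp_const a).add ((memLp_integral_abs hXm hX hQ).const_mul b)) (ae_of_all _ hZ)
  simp only [sqrt_integral_const_mul_sq, abs_of_nonneg hγ, sq_abs] at h
  exact h.trans <|
    add_le_add_right (sqrt_integral_sq_const_add_mul_integral_abs_le ha hb hXm hX hQ) _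

lemma sqrt_integral_integral_sq_le_of_abs_le_integral_abs (hγ : 0 ≤ γ) (ha : 0 ≤ a) (hb : 0 ≤ b)
    (hXm : Measurable (Function.uncurry X)) (hX : ∀ ω, MemLp (X ω) 2 ν)
    (hQ : Integrable (fun ω => ∫ t, X ω t ^ 2 ∂ν) ℙ) {Y : Ω → τ → ℝ}
    (hY : ∀ ω, ∀ᵐ t ∂ν, |Y ω t| ≤ γ * |X ω t| + (a + b * ∫ s, |X ω s| ∂ν)) :
    √(∫ ω, ∫ t, Y ω t ^ 2 ∂ν ∂ℙ) ≤ γ * √(∫ ω, ∫ t, X ω t ^ 2 ∂ν ∂ℙ) +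
      √(ν.real univ) * (a + b * (√(ν.real univ) * √(∫ ω, ∫ t, X ω t ^ 2 ∂ν ∂ℙ))) :=
  (sqrt_integral_integral_sq_le hγ hX hQ
    ((memLp_const a).add ((memLp_integral_abs hXm hX hQ).const_mul b)) hY).trans <|
      add_le_add_right (mul_le_mul_of_nonneg_left
        (sqrt_integral_sq_const_add_mul_integral_abs_le ha hb hXm hX hQ) (Real.sqrt_nonneg _)) _

end Paths

noncomputable def priceImpact (γ x₀ : ℝ) (ρ x : ℝ → ℝ) (t : ℝ) : ℝ :=
  γ * x t - γ * Real.exp (-(∫ u in (0:ℝ)..t, ρ u)) *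
    (x₀ + ∫ s in (0:ℝ)..t, ρ s * x s * Real.exp (∫ u in (0:ℝ)..s, ρ u))

section Impact
variable {ρ x : ℝ → ℝ} {ρhi t : ℝ}

lemma intervalIntegrable_of_measurable_of_mem_Icc {a b : ℝ} (hab : a ≤ b) (hρm : Measurable ρ)
    (hρ : ∀ s ∈ Icc a b, ρ s ∈ Icc 0 ρhi) : IntervalIntegrable ρ volume a b :=
  (intervalIntegrable_iff_integrableOn_Icc_of_le hab).2 <| IntegrableOn.of_bound
    measure_Icc_lt_top hρm.aestronglyMeasurable ρhi
    ((ae_restrict_iff' measurableSet_Icc).2 (ae_of_all _ fun s hs => by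
      rw [Real.norm_eq_abs, abs_of_nonneg (hρ s hs).1]; exact (hρ s hs).2))

lemma abs_integral_mul_exp_integral_le (ht : 0 ≤ t) (hρ : ∀ s ∈ Icc 0 t, ρ s ∈ Icc 0 ρhi)
    (hρi : IntervalIntegrable ρ volume 0 t) (hx : IntegrableOn x (Ioc 0 t)) :
    |∫ s in (0:ℝ)..t, ρ s * x s * Real.exp (∫ u in (0:ℝ)..s, ρ u)| ≤
      ρhi * Real.exp (∫ u in (0:ℝ)..t, ρ u) * ∫ s in Ioc 0 t, |x s| := by
  have hρ₀ : 0 ≤ᵐ[volume.restrict (Ioc 0 t)] ρ :=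
    (ae_restrict_iff' measurableSet_Ioc).2 (ae_of_all _ fun u hu => (hρ u ⟨hu.1.le, hu.2⟩).1)
  rw [intervalIntegral.integral_of_le ht, ← integral_const_mul, ← Real.norm_eq_abs]
  refine norm_integral_le_of_norm_le (hx.norm.const_mul _)
    ((ae_restrict_iff' measurableSet_Ioc).2 (ae_of_all _ fun s hs => ?_))
  obtain ⟨hρs₀, hρs⟩ := hρ s ⟨hs.1.le, hs.2⟩
  have hmono : ∫ u in (0:ℝ)..s, ρ u ≤ ∫ u in (0:ℝ)..t, ρ u :=
    intervalIntegral.integral_mono_interval le_rfl hs.1.le hs.2 hρ₀ hρi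
  rw [Real.norm_eq_abs, abs_mul, abs_mul, abs_of_nonneg hρs₀, Real.abs_exp]
  calc ρ s * |x s| * Real.exp (∫ u in (0:ℝ)..s, ρ u)
      ≤ ρhi * |x s| * Real.exp (∫ u in (0:ℝ)..t, ρ u) :=
        mul_le_mul (mul_le_mul_of_nonneg_right hρs (abs_nonneg _)) (Real.exp_le_exp.2 hmono)
          (Real.exp_pos _).le (mul_nonneg (hρs₀.trans hρs) (abs_nonneg _))
    _ = ρhi * Real.exp (∫ u in (0:ℝ)..t, ρ u) * ‖x s‖ := by rw [Real.norm_eq_abs]; ring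

lemma abs_priceImpact_le {γ x₀ T : ℝ} (hγ : 0 ≤ γ) (hx₀ : 0 ≤ x₀) (ht : t ∈ Icc 0 T)
    (hρ : ∀ s ∈ Icc 0 T, ρ s ∈ Icc 0 ρhi) (hρi : IntervalIntegrable ρ volume 0 T)
    (hx : IntegrableOn x (Ioc 0 T)) :
    |priceImpact γ x₀ ρ x t| ≤ γ * |x t| + (γ * x₀ + γ * ρhi * ∫ s in Ioc 0 T, |x s|) := by
  set R := ∫ u in (0:ℝ)..t, ρ u
  set J := ∫ s in (0:ℝ)..t, ρ s * x s * Real.exp (∫ u in (0:ℝ)..s, ρ u)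
  have hR : 0 ≤ R := intervalIntegral.integral_nonneg ht.1 fun u hu =>
    (hρ u ⟨hu.1, hu.2.trans ht.2⟩).1
  have hJ : |J| ≤ ρhi * Real.exp R * ∫ s in Ioc 0 T, |x s| := by
    refine (abs_integral_mul_exp_integral_le ht.1 (fun s hs => hρ s ⟨hs.1, hs.2.trans ht.2⟩)
      (hρi.mono_set ?_) (hx.mono_set (Ioc_subset_Ioc_right ht.2))).trans ?_
    · rw [uIcc_of_le ht.1, uIcc_of_le (ht.1.trans ht.2)]
      exact Icc_subset_Icc_right ht.2
    · obtain ⟨h0, h1⟩ := hρ 0 ⟨le_rfl, ht.1.trans ht.2⟩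
      exact mul_le_mul_of_nonneg_left (setIntegral_mono_set hx.abs
        (ae_of_all _ fun s => abs_nonneg _) (Ioc_subset_Ioc_right ht.2).eventuallyLE)
        (mul_nonneg (h0.trans h1) (Real.exp_pos _).le)
  have hexp : Real.exp (-R) * Real.exp R = 1 := by
    rw [← Real.exp_add, neg_add_cancel, Real.exp_zero]
  have hexp_le : Real.exp (-R) ≤ 1 := Real.exp_le_one_iff.2 (neg_nonpos.2 hR)
  calc |priceImpact γ x₀ ρ x t| ≤ |γ * x t| + |γ * Real.exp (-R) * (x₀ + J)| := abs_sub _ _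
    _ ≤ γ * |x t| + γ * (Real.exp (-R) * (x₀ + |J|)) := by
        rw [abs_mul, abs_mul, abs_mul, abs_of_nonneg hγ, Real.abs_exp, mul_assoc]
        gcongr
        exact (abs_add_le _ _).trans_eq (by rw [abs_of_nonneg hx₀])
    _ ≤ γ * |x t| + γ * (x₀ + ρhi * ∫ s in Ioc 0 T, |x s|) := by
        rw [mul_add (Real.exp (-R))]
        gcongr γ * |x t| + γ * (?_ + ?_)
        · exact mul_le_of_le_one_left hx₀ hexp_le
        calc Real.exp (-R) * |J|
            ≤ Real.exp (-R) * (ρhi * Real.exp R * ∫ s in Ioc 0 T, |x s|) := by gcongr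
          _ = ρhi * ∫ s in Ioc 0 T, |x s| := by
            rw [mul_comm ρhi, mul_assoc, ← mul_assoc, hexp, one_mul]
    _ = γ * |x t| + (γ * x₀ + γ * ρhi * ∫ s in Ioc 0 T, |x s|) := by ring

end Impact

theorem stmt_10_general {Ω : Type*} [MeasurableSpace Ω] (ℙ : Measure Ω) [IsProbabilityMeasure ℙ]
    (T γ ρhi X₀ : ℝ) (hT : 0 < T) (hγ : 0 < γ) (hρhi : 0 < ρhi) (hX₀ : 0 ≤ X₀)
    (ρ : Ω → ℝ → ℝ) (hρmeas : Measurable (Function.uncurry ρ))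
    (hρb : ∀ ω, ∀ t ∈ Icc (0:ℝ) T, ρ ω t ∈ Icc 0 ρhi)
    (X : Ω → ℝ → ℝ) (hXmeas : Measurable (Function.uncurry X))
    (hXii : ∀ ω, IntervalIntegrable (fun t => (X ω t) ^ 2) MeasureTheory.volume 0 T)
    (hXint : Integrable (fun ω => ∫ t in (0:ℝ)..T, (X ω t) ^ 2) ℙ)
    (hXT : Integrable (fun ω => (X ω T) ^ 2) ℙ)
    (Y : Ω → ℝ → ℝ)
    (hY : ∀ ω t, Y ω t = γ * X ω t -
      γ * Real.exp (-(∫ u in (0:ℝ)..t, ρ ω u)) *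
        (X₀ + ∫ s in (0:ℝ)..t, ρ ω s * X ω s * Real.exp (∫ u in (0:ℝ)..s, ρ ω u))) :
    Real.sqrt (∫ ω, (Y ω T) ^ 2 ∂ℙ) ≤
        γ * (X₀ + Real.sqrt (∫ ω, (X ω T) ^ 2 ∂ℙ) +
          ρhi * Real.exp (T * ρhi) *
            Real.sqrt (T * ∫ ω, (∫ t in (0:ℝ)..T, (X ω t) ^ 2) ∂ℙ)) ∧
      Real.sqrt (∫ ω, (∫ t in (0:ℝ)..T, (Y ω t) ^ 2) ∂ℙ) ≤
        γ * X₀ * Real.sqrt T +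
          γ * (1 + T * ρhi * Real.exp (T * ρhi)) *
            Real.sqrt (∫ ω, (∫ t in (0:ℝ)..T, (X ω t) ^ 2) ∂ℙ) := by
  simp only [intervalIntegral.integral_of_le hT.le] at hXint ⊢
  set ν := volume.restrict (Ioc 0 T)
  have hXν : ∀ ω, MemLp (X ω) 2 ν := fun ω =>
    (memLp_two_iff_integrable_sq (hXmeas.comp measurable_prodMk_left).aestronglyMeasurable).2
      ((intervalIntegrable_iff_integrableOn_Ioc_of_le hT.le).1 (hXii ω))
  have hbound : ∀ ω, ∀ t ∈ Icc 0 T,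
      |Y ω t| ≤ γ * |X ω t| + (γ * X₀ + γ * ρhi * ∫ s, |X ω s| ∂ν) := fun ω t ht => by
    rw [hY ω t]
    exact abs_priceImpact_le hγ.le hX₀ ht (hρb ω) (intervalIntegrable_of_measurable_of_mem_Icc
      hT.le (hρmeas.comp measurable_prodMk_left) (hρb ω)) ((hXν ω).integrable one_le_two)
  have hXTL2 : MemLp (fun ω => X ω T) 2 ℙ :=
    (memLp_two_iff_integrable_sq (hXmeas.comp measurable_prodMk_right).aestronglyMeasurable).2 hXT
  have hγX₀ := mul_nonneg hγ.le hX₀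
  have hγρ := mul_nonneg hγ.le hρhi.le
  have h49 := sqrt_integral_sq_le_of_abs_le_integral_abs hγ.le hγX₀ hγρ hXmeas hXν hXint hXTL2
    fun ω => hbound ω T ⟨hT.le, le_rfl⟩
  have h410 := sqrt_integral_integral_sq_le_of_abs_le_integral_abs hγ.le hγX₀ hγρ hXmeas hXν
    hXint fun ω => (ae_restrict_iff' measurableSet_Ioc).2
      (ae_of_all _ fun t ht => hbound ω t (Ioc_subset_Icc_self ht))
  have hνT : ν.real univ = T := by simp [ν, hT.le]
  rw [hνT] at h49 h410
  set S := √(∫ ω, ∫ t, X ω t ^ 2 ∂ν ∂ℙ)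
  have hexp : 1 ≤ Real.exp (T * ρhi) := Real.one_le_exp (by positivity)
  constructor
  · rw [Real.sqrt_mul hT.le]
    calc _ ≤ _ := h49
      _ = γ * (X₀ + √(∫ ω, X ω T ^ 2 ∂ℙ) + ρhi * 1 * (√T * S)) := by ring
      _ ≤ _ := by gcongr
  · calc _ ≤ _ := h410
      _ = γ * X₀ * √T + γ * (1 + T * ρhi * 1) * S := by
          linear_combination (γ * ρhi * S) * Real.mul_self_sqrt hT.le
      _ ≤ _ := by gcongr

/-- Lemma 4.9, estimates (4.9) and (4.10): bounds on the transient price impact process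
`Y_t = γX_t − γe^{−∫₀ᵗρ}(X₀ + ∫₀ᵗ ρ_s X_s e^{∫₀ˢρ} ds)`. -/
theorem stmt_10 {Ω : Type*} [MeasurableSpace Ω] (ℙ : Measure Ω) [IsProbabilityMeasure ℙ]
    (T γ ρhi X₀ : ℝ) (hT : 0 < T) (hγ : 0 < γ) (hρhi : 0 < ρhi) (hX₀ : 0 ≤ X₀)
    (ρ : Ω → ℝ → ℝ) (hρmeas : Measurable (Function.uncurry ρ))
    (hρb : ∀ ω, ∀ t ∈ Icc (0:ℝ) T, ρ ω t ∈ Icc 0 ρhi)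
    (X : Ω → ℝ → ℝ) (hXmeas : Measurable (Function.uncurry X))
    (hX0 : ∀ ω, X ω 0 = X₀)
    (hXii : ∀ ω, IntervalIntegrable (fun t => (X ω t) ^ 2) MeasureTheory.volume 0 T)
    (hXint : Integrable (fun ω => ∫ t in (0:ℝ)..T, (X ω t) ^ 2) ℙ)
    (hXT : Integrable (fun ω => (X ω T) ^ 2) ℙ)
    (Y : Ω → ℝ → ℝ)
    (hY : ∀ ω t, Y ω t = γ * X ω t -
      γ * Real.exp (-(∫ u in (0:ℝ)..t, ρ ω u)) *
        (X₀ + ∫ s in (0:ℝ)..t, ρ ω s * X ω s * Real.exp (∫ u in (0:ℝ)..s, ρ ω u))) :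
    Real.sqrt (∫ ω, (Y ω T) ^ 2 ∂ℙ) ≤
        γ * (X₀ + Real.sqrt (∫ ω, (X ω T) ^ 2 ∂ℙ) +
          ρhi * Real.exp (T * ρhi) *
            Real.sqrt (T * ∫ ω, (∫ t in (0:ℝ)..T, (X ω t) ^ 2) ∂ℙ)) ∧
      Real.sqrt (∫ ω, (∫ t in (0:ℝ)..T, (Y ω t) ^ 2) ∂ℙ) ≤
        γ * X₀ * Real.sqrt T +
          γ * (1 + T * ρhi * Real.exp (T * ρhi)) *
            Real.sqrt (∫ ω, (∫ t in (0:ℝ)..T, (X ω t) ^ 2) ∂ℙ) :=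
  stmt_10_general ℙ T γ ρhi X₀ hT hγ hρhi hX₀ ρ hρmeas hρb X hXmeas hXii hXint hXT Y hY
end

section
/- Let (Ω, F, (F_t)_{t∈I}, ℙ) be a filtered probability space and let X = {X_t}_{t∈I} and Y = {Y_t}_{t∈I} be continuous, adapted, essentially bounded, real-valued processes on an interval I. (i) If X satisfies Condition C.2 and Y satisfies Condition C.1, then the product process X·Y satisfies Condition C.1. (ii) If X and Y both satisfy Condition C.2, then X·Y satisfies Condition C.2. -/
open Set MeasureTheory

/-- Condition C.1 of the paper. -/
def CondC1 {Ω : Type*} {mΩ : MeasurableSpace Ω} (ℙ : Measure Ω) (ℱ : Filtration ℝ mΩ)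
    (I : Set ℝ) {E : Type*} [NormedAddCommGroup E] [NormedSpace ℝ E]
    (Y : ℝ → Ω → E) : Prop :=
  ∀ ε > (0:ℝ), ∃ δ > (0:ℝ), ∀ s ∈ I, ∀ V : Ω → ℝ,
    Integrable V ℙ → StronglyMeasurable[ℱ s] V →
      ∀ τ : Ω → ℝ, IsStoppingTime ℱ (fun ω => (τ ω : WithTop ℝ)) → (∀ ω, τ ω ∈ Icc s (s + δ) ∩ I) →
        ‖∫ ω, V ω • (Y (τ ω) ω - Y s ω) ∂ℙ‖ ≤ ε * ∫ ω, |V ω| ∂ℙ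

/-- Condition C.2 of the paper. -/
def CondC2 {Ω : Type*} {mΩ : MeasurableSpace Ω} (ℙ : Measure Ω) (ℱ : Filtration ℝ mΩ)
    (I : Set ℝ) {E : Type*} [NormedAddCommGroup E] (Y : ℝ → Ω → E) : Prop :=
  ∀ ε > (0:ℝ), ∃ δ > (0:ℝ), ∀ s ∈ I,
    ∀ᵐ ω ∂ℙ,
      (ℙ[fun ω' => ⨆ t : (Icc s (s + δ) ∩ I : Set ℝ), ‖Y t ω' - Y s ω'‖ | ℱ s]) ω ≤ ε

/-!
Both parts rest on the identity `X_t Y_t - X_s Y_s = X_s (Y_t - Y_s) + (X_t - X_s) Y_t` and the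
bounds `|X|, |Y| ≤ C`. For (i), the first term is controlled by C.1 for `Y` applied to the
`ℱ s`-measurable weight `V X_s`; for the second, `|V|` pulls out of the conditional expectation
given `ℱ s`, so `∫ |V| |X_τ - X_s| ≤ ∫ |V| 𝔼[sup_t |X_t - X_s| | ℱ s] ≤ ε ∫ |V|` by C.2 for `X`.
For (ii), the identity bounds the supremal increment of `XY` pointwise by `C` times the sum of
those of `X` and `Y`. The suprema over `[s, s + δ] ∩ I` are measurable because, by continuity,
they agree with suprema over a countable dense subset.
-/

section

variable {Ω : Type*} {mΩ : MeasurableSpace Ω}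

/-- `CondC2` bounds the conditional expectation of this supremal increment given `ℱ s`. -/
noncomputable def supIncr {E : Type*} [NormedAddCommGroup E] (I : Set ℝ) (Y : ℝ → Ω → E)
    (s δ : ℝ) (ω : Ω) : ℝ :=
  ⨆ t : (Icc s (s + δ) ∩ I : Set ℝ), ‖Y t ω - Y s ω‖

lemma measurable_iSup_of_continuousOn {ι : Type*} [TopologicalSpace ι] [SecondCountableTopology ι]
    {S : Set ι} {f : ι → Ω → ℝ} (hm : ∀ t ∈ S, Measurable (f t))
    (hc : ∀ ω, ContinuousOn (fun t => f t ω) S) :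
    Measurable fun ω => ⨆ t : S, f t ω := by
  obtain ⟨D, hDc, hDd⟩ := TopologicalSpace.exists_countable_dense S
  have : Countable D := hDc.to_subtype
  have hsup : (fun ω => ⨆ t : S, f t ω) = fun ω => ⨆ t : D, f t ω :=
    funext fun ω => (hDd.ciSup' (hc ω).domRestrict).symm
  rw [hsup]
  exact Measurable.iSup fun t => hm t t.1.2

lemma measurable_stoppedValue_of_continuousOn {I : Set ℝ} {f : ℝ → Ω → ℝ}
    (hm : ∀ t ∈ I, Measurable (f t)) (hc : ∀ ω, ContinuousOn (fun t => f t ω) I)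
    {τ : Ω → ℝ} (hτ : Measurable τ) (hτI : ∀ ω, τ ω ∈ I) :
    Measurable fun ω => f (τ ω) ω := by
  have hf : Measurable (Function.uncurry fun (t : I) ω => f t ω) :=
    measurable_uncurry_of_continuous_of_measurable (fun ω => (hc ω).domRestrict)
      fun t => hm t t.2
  exact hf.comp ((hτ.subtype_mk (h := hτI)).prodMk measurable_id)

lemma abs_sub_le_two_mul {a b C : ℝ} (ha : |a| ≤ C) (hb : |b| ≤ C) : |a - b| ≤ 2 * C := by
  linarith [abs_sub a b]

lemma abs_mul_sub_mul_le {x y x' y' C : ℝ} (hx : |x| ≤ C) (hy' : |y'| ≤ C) :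
    |x * y - x' * y'| ≤ C * |y - y'| + C * |x - x'| :=
  calc |x * y - x' * y'| = |x * (y - y') + (x - x') * y'| := by ring_nf
    _ ≤ |x| * |y - y'| + |x - x'| * |y'| := by
      rw [← abs_mul, ← abs_mul]; exact abs_add_le _ _
    _ ≤ C * |y - y'| + |x - x'| * C := by gcongr
    _ = C * |y - y'| + C * |x - x'| := by ring

section supIncr

variable {I : Set ℝ} {Y : ℝ → Ω → ℝ} {C s δ : ℝ} {ω : Ω}

lemma supIncr_nonneg : 0 ≤ supIncr I Y s δ ω :=
  Real.iSup_nonneg fun _ => norm_nonneg _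

lemma supIncr_le (hs : s ∈ I) (hb : ∀ t ∈ I, |Y t ω| ≤ C) : supIncr I Y s δ ω ≤ 2 * C :=
  Real.iSup_le (fun t => abs_sub_le_two_mul (hb t t.2.2) (hb s hs))
    (by linarith [abs_nonneg (Y s ω), hb s hs])

lemma norm_sub_le_supIncr (hs : s ∈ I) (hb : ∀ t ∈ I, |Y t ω| ≤ C) {t : ℝ}
    (ht : t ∈ Icc s (s + δ) ∩ I) : ‖Y t ω - Y s ω‖ ≤ supIncr I Y s δ ω := by
  refine le_ciSup (f := fun t : (Icc s (s + δ) ∩ I : Set ℝ) => ‖Y t ω - Y s ω‖) ?_ ⟨t, ht⟩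
  exact ⟨2 * C, by rintro _ ⟨u, rfl⟩; exact abs_sub_le_two_mul (hb u u.2.2) (hb s hs)⟩

lemma measurable_supIncr (hm : ∀ t ∈ I, Measurable (Y t))
    (hc : ∀ ω, ContinuousOn (fun t => Y t ω) I) (hs : s ∈ I) :
    Measurable (supIncr I Y s δ) :=
  measurable_iSup_of_continuousOn (fun t ht => ((hm t ht.2).sub (hm s hs)).norm)
    fun ω => (((hc ω).mono inter_subset_right).sub continuousOn_const).norm

lemma integrable_supIncr {ℙ : Measure Ω} [IsFiniteMeasure ℙ] (hm : ∀ t ∈ I, Measurable (Y t))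
    (hc : ∀ ω, ContinuousOn (fun t => Y t ω) I) (hs : s ∈ I)
    (hb : ∀ᵐ ω ∂ℙ, ∀ t ∈ I, |Y t ω| ≤ C) : Integrable (supIncr I Y s δ) ℙ := by
  refine (integrable_const (2 * C)).mono' (measurable_supIncr hm hc hs).aestronglyMeasurable ?_
  filter_upwards [hb] with ω hω
  rw [Real.norm_eq_abs, abs_of_nonneg supIncr_nonneg]
  exact supIncr_le hs hω

lemma supIncr_mul_le {X : ℝ → Ω → ℝ} {δX δY : ℝ} (hs : s ∈ I) (hX : ∀ t ∈ I, |X t ω| ≤ C)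
    (hY : ∀ t ∈ I, |Y t ω| ≤ C) (hδX : δ ≤ δX) (hδY : δ ≤ δY) :
    supIncr I (fun t ω => X t ω * Y t ω) s δ ω
      ≤ C * supIncr I Y s δY ω + C * supIncr I X s δX ω := by
  have hC : 0 ≤ C := (abs_nonneg _).trans (hX s hs)
  refine Real.iSup_le (fun ⟨t, ⟨hst, htδ⟩, htI⟩ => ?_)
    (add_nonneg (mul_nonneg hC supIncr_nonneg) (mul_nonneg hC supIncr_nonneg))
  have hY' := norm_sub_le_supIncr hs hY (t := t) (δ := δY) ⟨⟨hst, by linarith⟩, htI⟩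
  have hX' := norm_sub_le_supIncr hs hX (t := t) (δ := δX) ⟨⟨hst, by linarith⟩, htI⟩
  calc ‖X t ω * Y t ω - X s ω * Y s ω‖
      ≤ C * ‖Y t ω - Y s ω‖ + C * ‖X t ω - X s ω‖ := abs_mul_sub_mul_le (hX t htI) (hY s hs)
    _ ≤ C * supIncr I Y s δY ω + C * supIncr I X s δX ω := by gcongr

end supIncr

lemma integral_mul_le_of_condExp_le {m m₀ : MeasurableSpace Ω} {μ : Measure Ω} (hm : m ≤ m₀)
    [SigmaFinite (μ.trim hm)] {w h : Ω → ℝ} {ε : ℝ} (hw : StronglyMeasurable[m] w)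
    (hw0 : 0 ≤ᵐ[μ] w) (hwint : Integrable w μ) (hh : Integrable h μ)
    (hwh : Integrable (w * h) μ) (hε : ∀ᵐ ω ∂μ, μ[h|m] ω ≤ ε) :
    ∫ ω, w ω * h ω ∂μ ≤ ε * ∫ ω, w ω ∂μ := by
  have hpull : μ[w * h|m] =ᵐ[μ] w * μ[h|m] := condExp_mul_of_stronglyMeasurable_left hw hwh hh
  calc ∫ ω, w ω * h ω ∂μ = ∫ ω, μ[w * h|m] ω ∂μ := (integral_condExp hm).symm
    _ = ∫ ω, w ω * μ[h|m] ω ∂μ := integral_congr_ae hpull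
    _ ≤ ∫ ω, w ω * ε ∂μ := by
      refine integral_mono_ae (integrable_condExp.congr hpull) (hwint.mul_const ε) ?_
      filter_upwards [hw0, hε] with ω h0 h1
      exact mul_le_mul_of_nonneg_left h1 h0
    _ = ε * ∫ ω, w ω ∂μ := by rw [integral_mul_const, mul_comm]

lemma norm_integral_smul_mul_sub_mul_le {μ : Measure Ω} {v a a' b b' : Ω → ℝ} {C ε₁ ε₂ : ℝ}
    (hv : Integrable v μ) (ha : AEStronglyMeasurable a μ) (ha' : AEStronglyMeasurable a' μ)
    (hb : AEStronglyMeasurable b μ) (hb' : AEStronglyMeasurable b' μ)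
    (hbound : ∀ᵐ ω ∂μ, |a ω| ≤ C ∧ |a' ω| ≤ C ∧ |b ω| ≤ C ∧ |b' ω| ≤ C) (hC : 0 ≤ C)
    (hε₁ : 0 ≤ ε₁) (h₁ : ‖∫ ω, (v ω * a ω) • (b' ω - b ω) ∂μ‖ ≤ ε₁ * ∫ ω, |v ω * a ω| ∂μ)
    (h₂ : ∫ ω, |v ω| * |a' ω - a ω| ∂μ ≤ ε₂ * ∫ ω, |v ω| ∂μ) :
    ‖∫ ω, v ω • (a' ω * b' ω - a ω * b ω) ∂μ‖
      ≤ C * ε₁ * ∫ ω, |v ω| ∂μ + C * ε₂ * ∫ ω, |v ω| ∂μ := by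
  simp only [smul_eq_mul] at h₁ ⊢
  have hva : Integrable (fun ω => v ω * a ω) μ :=
    hv.mul_bdd ha (hbound.mono fun ω h => h.1)
  have hfirst : Integrable (fun ω => v ω * a ω * (b' ω - b ω)) μ :=
    hva.mul_bdd (hb'.sub hb) (hbound.mono fun ω h => abs_sub_le_two_mul h.2.2.2 h.2.2.1)
  have hsecond : Integrable (fun ω => v ω * ((a' ω - a ω) * b' ω)) μ :=
    hv.mul_bdd ((ha'.sub ha).mul hb') (hbound.mono fun ω h => by
      rw [Real.norm_eq_abs, abs_mul]
      exact mul_le_mul (abs_sub_le_two_mul h.2.1 h.1) h.2.2.2 (abs_nonneg _) (by linarith))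
  have hsplit : ∫ ω, v ω * (a' ω * b' ω - a ω * b ω) ∂μ
      = ∫ ω, v ω * a ω * (b' ω - b ω) ∂μ + ∫ ω, v ω * ((a' ω - a ω) * b' ω) ∂μ := by
    rw [← integral_add hfirst hsecond]
    exact integral_congr_ae (ae_of_all _ fun ω => by ring)
  have hva_le : ∫ ω, |v ω * a ω| ∂μ ≤ C * ∫ ω, |v ω| ∂μ := by
    rw [← integral_const_mul]
    refine integral_mono_ae hva.abs (hv.abs.const_mul C) ?_
    filter_upwards [hbound] with ω h
    rw [abs_mul, mul_comm C]
    exact mul_le_mul_of_nonneg_left h.1 (abs_nonneg _)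
  have hsecond_le : ‖∫ ω, v ω * ((a' ω - a ω) * b' ω) ∂μ‖
      ≤ C * ∫ ω, |v ω| * |a' ω - a ω| ∂μ := by
    rw [← integral_const_mul]
    refine (norm_integral_le_integral_norm _).trans (integral_mono_ae hsecond.norm ?_ ?_)
    · refine (hv.abs.mul_bdd (c := 2 * C) (ha'.sub ha).norm ?_).const_mul C
      filter_upwards [hbound] with ω h
      exact (abs_norm _).trans_le (abs_sub_le_two_mul h.2.1 h.1)
    · filter_upwards [hbound] with ω h
      rw [Real.norm_eq_abs, abs_mul, abs_mul, mul_comm C, mul_assoc]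
      gcongr
      exact h.2.2.2
  rw [hsplit]
  calc _ ≤ ‖∫ ω, v ω * a ω * (b' ω - b ω) ∂μ‖ + ‖∫ ω, v ω * ((a' ω - a ω) * b' ω) ∂μ‖ :=
        norm_add_le _ _
    _ ≤ ε₁ * (C * ∫ ω, |v ω| ∂μ) + C * (ε₂ * ∫ ω, |v ω| ∂μ) := by
      gcongr
      · exact h₁.trans (by gcongr)
      · exact hsecond_le.trans (by gcongr)
    _ = _ := by ring

lemma ae_condExp_le_of_le_add {m m₀ : MeasurableSpace Ω} {μ : Measure Ω} {f g₁ g₂ : Ω → ℝ}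
    {a b c₁ c₂ : ℝ} (hf : Integrable f μ) (hg₁ : Integrable g₁ μ) (hg₂ : Integrable g₂ μ)
    (hle : ∀ᵐ ω ∂μ, f ω ≤ a * g₁ ω + b * g₂ ω) (ha : 0 ≤ a) (hb : 0 ≤ b)
    (h₁ : ∀ᵐ ω ∂μ, μ[g₁|m] ω ≤ c₁) (h₂ : ∀ᵐ ω ∂μ, μ[g₂|m] ω ≤ c₂) :
    ∀ᵐ ω ∂μ, μ[f|m] ω ≤ a * c₁ + b * c₂ := by
  filter_upwards [condExp_mono (m := m) hf ((hg₁.smul a).add (hg₂.smul b)) hle,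
    condExp_add (hg₁.smul a) (hg₂.smul b) m, condExp_smul a g₁ m, condExp_smul b g₂ m, h₁, h₂]
    with ω hmono hadd hsmul₁ hsmul₂ h₁ h₂
  calc μ[f|m] ω ≤ μ[a • g₁ + b • g₂|m] ω := hmono
    _ = a * μ[g₁|m] ω + b * μ[g₂|m] ω := by
      rw [hadd, Pi.add_apply, hsmul₁, hsmul₂]; rfl
    _ ≤ a * c₁ + b * c₂ := by gcongr

section Product

variable {ℙ : Measure Ω} {ℱ : Filtration ℝ mΩ} {I : Set ℝ} {X Y : ℝ → Ω → ℝ} {C : ℝ}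

lemma integral_abs_mul_abs_stopped_sub_le [IsFiniteMeasure ℙ] {s δ ε : ℝ}
    (hm : ∀ t ∈ I, Measurable (X t)) (hc : ∀ ω, ContinuousOn (fun t => X t ω) I)
    (hb : ∀ᵐ ω ∂ℙ, ∀ t ∈ I, |X t ω| ≤ C) (hs : s ∈ I)
    (hX : ∀ᵐ ω ∂ℙ, ℙ[supIncr I X s δ|ℱ s] ω ≤ ε) {V : Ω → ℝ} (hV : Integrable V ℙ)
    (hVm : StronglyMeasurable[ℱ s] V) {τ : Ω → ℝ} (hτ : Measurable τ)
    (hτI : ∀ ω, τ ω ∈ Icc s (s + δ) ∩ I) :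
    ∫ ω, |V ω| * |X (τ ω) ω - X s ω| ∂ℙ ≤ ε * ∫ ω, |V ω| ∂ℙ := by
  set h : Ω → ℝ := fun ω => |X (τ ω) ω - X s ω|
  have hh_meas : Measurable h :=
    ((measurable_stoppedValue_of_continuousOn hm hc hτ fun ω => (hτI ω).2).sub (hm s hs)).abs
  have hh_bound : ∀ᵐ ω ∂ℙ, ‖h ω‖ ≤ 2 * C := hb.mono fun ω hω =>
    (abs_abs _).trans_le (abs_sub_le_two_mul (hω _ (hτI ω).2) (hω s hs))
  have hh_int : Integrable h ℙ :=
    (integrable_const (2 * C)).mono' hh_meas.aestronglyMeasurable hh_bound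
  have hh_le : h ≤ᵐ[ℙ] supIncr I X s δ := hb.mono fun ω hω => norm_sub_le_supIncr hs hω (hτI ω)
  have hcond : ∀ᵐ ω ∂ℙ, ℙ[h|ℱ s] ω ≤ ε := by
    filter_upwards [condExp_mono hh_int (integrable_supIncr hm hc hs hb) hh_le, hX] with ω h₁ h₂
    exact h₁.trans h₂
  exact integral_mul_le_of_condExp_le (ℱ.le s) hVm.norm (ae_of_all _ fun ω => abs_nonneg _)
    hV.abs hh_int (hV.abs.mul_bdd hh_meas.aestronglyMeasurable hh_bound) hcond

lemma measurable_of_isStoppingTime_of_le {τ : Ω → ℝ}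
    (hτ : IsStoppingTime ℱ (fun ω => (τ ω : WithTop ℝ))) {b : ℝ} (hb : ∀ ω, τ ω ≤ b) :
    Measurable τ :=
  ((hτ.measurable_of_le (i := b) fun ω => WithTop.coe_le_coe.mpr (hb ω)).mono
    (ℱ.le b) le_rfl).untopD 0

theorem condC1_mul_of_condC2_of_condC1 [IsFiniteMeasure ℙ]
    (hXa : ∀ t ∈ I, StronglyMeasurable[ℱ t] (X t)) (hYm : ∀ t ∈ I, Measurable (Y t))
    (hXc : ∀ ω, ContinuousOn (fun t => X t ω) I) (hYc : ∀ ω, ContinuousOn (fun t => Y t ω) I)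
    (hC : 0 < C) (hXb : ∀ᵐ ω ∂ℙ, ∀ t ∈ I, |X t ω| ≤ C) (hYb : ∀ᵐ ω ∂ℙ, ∀ t ∈ I, |Y t ω| ≤ C)
    (hX : CondC2 ℙ ℱ I X) (hY : CondC1 ℙ ℱ I Y) :
    CondC1 ℙ ℱ I (fun t ω => X t ω * Y t ω) := by
  intro ε hε
  obtain ⟨δX, hδX, hXδ⟩ := hX (ε / (2 * C)) (by positivity)
  obtain ⟨δY, hδY, hYδ⟩ := hY (ε / (2 * C)) (by positivity)
  refine ⟨min δX δY, lt_min hδX hδY, fun s hs V hV hVm τ hτ hτI => ?_⟩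
  have hτX : ∀ ω, τ ω ∈ Icc s (s + δX) ∩ I := fun ω =>
    ⟨⟨(hτI ω).1.1, (hτI ω).1.2.trans (by linarith [min_le_left δX δY])⟩, (hτI ω).2⟩
  have hτY : ∀ ω, τ ω ∈ Icc s (s + δY) ∩ I := fun ω =>
    ⟨⟨(hτI ω).1.1, (hτI ω).1.2.trans (by linarith [min_le_right δX δY])⟩, (hτI ω).2⟩
  have hτm : Measurable τ := measurable_of_isStoppingTime_of_le hτ fun ω => (hτI ω).1.2
  have hXm : ∀ t ∈ I, Measurable (X t) := fun t ht => (hXa t ht).measurable.mono (ℱ.le t) le_rfl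
  have hVX : Integrable (fun ω => V ω * X s ω) ℙ :=
    hV.mul_bdd (hXm s hs).aestronglyMeasurable (hXb.mono fun ω hω => hω s hs)
  have h₁ := hYδ s hs _ hVX (hVm.mul (hXa s hs)) τ hτ hτY
  have h₂ := integral_abs_mul_abs_stopped_sub_le hXm hXc hXb hs (hXδ s hs) hV hVm hτm hτX
  refine (norm_integral_smul_mul_sub_mul_le hV (hXm s hs).aestronglyMeasurable
    (measurable_stoppedValue_of_continuousOn hXm hXc hτm fun ω => (hτI ω).2).aestronglyMeasurable
    (hYm s hs).aestronglyMeasurable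
    (measurable_stoppedValue_of_continuousOn hYm hYc hτm fun ω => (hτI ω).2).aestronglyMeasurable
    ?_ hC.le (by positivity) h₁ h₂).trans_eq ?_
  · filter_upwards [hXb, hYb] with ω hXω hYω
    exact ⟨hXω s hs, hXω _ (hτI ω).2, hYω s hs, hYω _ (hτI ω).2⟩
  · field_simp
    ring

theorem condC2_mul [IsFiniteMeasure ℙ] (hXm : ∀ t ∈ I, Measurable (X t))
    (hYm : ∀ t ∈ I, Measurable (Y t)) (hXc : ∀ ω, ContinuousOn (fun t => X t ω) I)
    (hYc : ∀ ω, ContinuousOn (fun t => Y t ω) I) (hC : 0 < C)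
    (hXb : ∀ᵐ ω ∂ℙ, ∀ t ∈ I, |X t ω| ≤ C) (hYb : ∀ᵐ ω ∂ℙ, ∀ t ∈ I, |Y t ω| ≤ C)
    (hX : CondC2 ℙ ℱ I X) (hY : CondC2 ℙ ℱ I Y) :
    CondC2 ℙ ℱ I (fun t ω => X t ω * Y t ω) := by
  intro ε hε
  obtain ⟨δX, hδX, hXδ⟩ := hX (ε / (2 * C)) (by positivity)
  obtain ⟨δY, hδY, hYδ⟩ := hY (ε / (2 * C)) (by positivity)
  refine ⟨min δX δY, lt_min hδX hδY, fun s hs => ?_⟩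
  have hXYb : ∀ᵐ ω ∂ℙ, ∀ t ∈ I, |X t ω * Y t ω| ≤ C * C := by
    filter_upwards [hXb, hYb] with ω hXω hYω t ht
    rw [abs_mul]
    exact mul_le_mul (hXω t ht) (hYω t ht) (abs_nonneg _) hC.le
  have hle : ∀ᵐ ω ∂ℙ, supIncr I (fun t ω => X t ω * Y t ω) s (min δX δY) ω
      ≤ C * supIncr I Y s δY ω + C * supIncr I X s δX ω := by
    filter_upwards [hXb, hYb] with ω hXω hYω
    exact supIncr_mul_le hs hXω hYω (min_le_left _ _) (min_le_right _ _)
  filter_upwards [ae_condExp_le_of_le_add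
    (integrable_supIncr (fun t ht => (hXm t ht).mul (hYm t ht)) (fun ω => (hXc ω).mul (hYc ω))
      hs hXYb)
    (integrable_supIncr hYm hYc hs hYb) (integrable_supIncr hXm hXc hs hXb) hle hC.le hC.le
    (hYδ s hs) (hXδ s hs)] with ω hω
  exact hω.trans_eq (by field_simp; ring)

end Product

end

/-- Theorem A.5: for continuous, adapted, essentially bounded real processes `X`, `Y`:
(i) if `X` satisfies C.2 and `Y` satisfies C.1, the product satisfies C.1;
(ii) if both satisfy C.2, the product satisfies C.2. -/
theorem stmt_13 {Ω : Type*} {mΩ : MeasurableSpace Ω} (ℙ : Measure Ω)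
    [IsProbabilityMeasure ℙ] (ℱ : Filtration ℝ mΩ) (I : Set ℝ)
    (X Y : ℝ → Ω → ℝ)
    (hXa : ∀ t ∈ I, StronglyMeasurable[ℱ t] (X t))
    (hYa : ∀ t ∈ I, StronglyMeasurable[ℱ t] (Y t))
    (hXc : ∀ ω, ContinuousOn (fun t => X t ω) I)
    (hYc : ∀ ω, ContinuousOn (fun t => Y t ω) I)
    (hXb : ∃ CX : ℝ, ∀ᵐ ω ∂ℙ, ∀ t ∈ I, |X t ω| ≤ CX)
    (hYb : ∃ CY : ℝ, ∀ᵐ ω ∂ℙ, ∀ t ∈ I, |Y t ω| ≤ CY) :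
    (CondC2 ℙ ℱ I X → CondC1 ℙ ℱ I Y → CondC1 ℙ ℱ I (fun t ω => X t ω * Y t ω)) ∧
      (CondC2 ℙ ℱ I X → CondC2 ℙ ℱ I Y → CondC2 ℙ ℱ I (fun t ω => X t ω * Y t ω)) := by
  obtain ⟨CX, hCX⟩ := hXb
  obtain ⟨CY, hCY⟩ := hYb
  set C := max (max CX CY) 1
  have hC : 0 < C := lt_of_lt_of_le one_pos (le_max_right _ _)
  have hXC : ∀ᵐ ω ∂ℙ, ∀ t ∈ I, |X t ω| ≤ C := hCX.mono fun ω h t ht =>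
    (h t ht).trans ((le_max_left _ _).trans (le_max_left _ _))
  have hYC : ∀ᵐ ω ∂ℙ, ∀ t ∈ I, |Y t ω| ≤ C := hCY.mono fun ω h t ht =>
    (h t ht).trans ((le_max_right _ _).trans (le_max_left _ _))
  have hXm : ∀ t ∈ I, Measurable (X t) := fun t ht => (hXa t ht).measurable.mono (ℱ.le t) le_rfl
  have hYm : ∀ t ∈ I, Measurable (Y t) := fun t ht => (hYa t ht).measurable.mono (ℱ.le t) le_rfl
  exact ⟨condC1_mul_of_condC2_of_condC1 hXa hYm hXc hYc hC hXC hYC,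
    condC2_mul hXm hYm hXc hYc hC hXC hYC⟩
end
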